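/- Let M be a finite set of goods, let v : 2^M → ℝ≥0 be an additive valuation, let n ≥ 4 be an integer, and let S = {h_1, h_2, s_1, s_2, s_3} ⊆ M be a set of five pairwise distinct goods such that v({h_j}) ≤ (4/5)·μ^n(M) for j ∈ {1,2} and v({s_j}) ≤ (2/5)·μ^n(M) for j ∈ {1,2,3}. Then μ^{n−3}(M \ S) ≥ μ^n(M), where μ^d(T) denotes the maximum over all partitions of T into d bundles of the minimum value of a bundle under v. -/

import Mathlib

/-!
Fix an optimal partition of `M` into `n` bundles, each worth at least `μ = μ^n(M)`. Removing the
five goods damages only the bundles in `D = P(S)`, so it suffices to dissolve three bundles into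
the others in such a way that every remaining bundle is still worth `μ`. If `|D| ≤ 3`, dissolve
three bundles covering `D` into an undamaged one. If `|D| = 4`, merge the four damaged bundles,
which keep at least `4μ - (14/5)μ ≥ μ`. If `|D| = 5`, merge the bundles of `h₁, h₂, s₁`
(at least `3μ - 2μ`) and those of `s₂, s₃` (at least `2μ - (4/5)μ`).
-/

open Finset

/-- The `d`-maximin share of valuation `v` over the set `S` of goods:
the maximum over partitions of `S` into `d` bundles of the minimum bundle value. -/
noncomputable def mms {G : Type*} (v : Finset G → ℝ) (d : ℕ) (S : Finset G) : ℝ :=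
  ⨆ P : G → Fin d, ⨅ j : Fin d, v (S.filter fun g => P g = j)

section MaximinShare

variable {G : Type*} [Finite G]

theorem exists_forall_mms_le (v : Finset G → ℝ) {d : ℕ} (hd : 0 < d) (T : Finset G) :
    ∃ P : G → Fin d, ∀ j, mms v d T ≤ v {g ∈ T | P g = j} := by
  have : Nonempty (Fin d) := ⟨⟨0, hd⟩⟩
  obtain ⟨P, hP⟩ := Finite.exists_max fun P : G → Fin d => ⨅ j, v {g ∈ T | P g = j}
  exact ⟨P, fun j => (ciSup_le hP).trans (ciInf_le (Set.finite_range _).bddBelow j)⟩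

theorem le_mms_of_forall_le {ι : Type*} [Fintype ι] [DecidableEq ι] [Nonempty ι]
    (v : Finset G → ℝ) {d : ℕ} (hι : Fintype.card ι = d) (T : Finset G) (Q : G → ι) {μ : ℝ}
    (h : ∀ i, μ ≤ v {g ∈ T | Q g = i}) : μ ≤ mms v d T := by
  let e := Fintype.equivFinOfCardEq hι
  have : Nonempty (Fin d) := ⟨e (Classical.arbitrary ι)⟩
  refine le_trans ?_ (le_ciSup (Set.finite_range _).bddAbove (e ∘ Q))
  refine le_ciInf fun j => ?_
  simpa only [Function.comp_apply, ← e.eq_symm_apply] using h (e.symm j)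

end MaximinShare

section Dissolve

variable {G ι : Type*} [DecidableEq ι]

/-- Bundle `j ∈ R` is merged into bundle `r j ∉ R`, where `b` gives the bundle values; every
resulting bundle is worth at least `μ`. -/
def CanDissolve (b : ι → ℝ) (μ : ℝ) (m : ℕ) : Prop :=
  ∃ R : Finset ι, ∃ r : ι → ι, #R = m ∧ (∀ j ∈ R, r j ∉ R) ∧
    ∀ k ∉ R, μ ≤ ∑ j ∈ insert k {j ∈ R | r j = k}, b j

theorem le_mms_of_canDissolve [Finite G] [Fintype ι] (w : G → ℝ) (T : Finset G) (P : G → ι)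
    {d m : ℕ} (hd : 0 < d) (hcard : Fintype.card ι = d + m) {μ : ℝ}
    (h : CanDissolve (fun j => ∑ g ∈ T with P g = j, w g) μ m) :
    μ ≤ mms (fun S => ∑ g ∈ S, w g) d T := by
  obtain ⟨R, r, rfl, hr, hR⟩ := h
  let f : ι → ↥Rᶜ := fun j =>
    if hj : j ∈ R then ⟨r j, mem_compl.2 (hr j hj)⟩ else ⟨j, mem_compl.2 hj⟩
  have hf (j : ι) (k : ↥Rᶜ) : f j = k ↔ j ∈ insert k.1 {j ∈ R | r j = k} := by
    have hk := mem_compl.1 k.2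
    by_cases hj : j ∈ R
    · have : j ≠ k := fun h => hk (h ▸ hj)
      simp only [f, hj, dite_true, Subtype.ext_iff, mem_insert, mem_filter, this, true_and,
        false_or]
    · simp only [f, hj, dite_false, Subtype.ext_iff, mem_insert, mem_filter, false_and, or_false]
  obtain ⟨k₀, hk₀⟩ : (Rᶜ).Nonempty := by
    rw [← card_pos, card_compl]; omega
  have : Nonempty ↥Rᶜ := ⟨⟨k₀, hk₀⟩⟩
  refine le_mms_of_forall_le _ (by rw [Fintype.card_coe, card_compl]; omega) T (f ∘ P)
    fun k => ?_
  simp only [Function.comp_apply, hf]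
  rw [← sum_fiberwise_eq_sum_filter]
  exact hR k (mem_compl.1 k.2)

end Dissolve

section Bundles

variable {G ι : Type*} [DecidableEq G] [DecidableEq ι] {w : G → ℝ} {M S : Finset G} {P : G → ι}
  {μ : ℝ}

theorem card_mul_sub_le_sum_sdiff (hw : ∀ g, 0 ≤ w g)
    (hP : ∀ j, μ ≤ ∑ g ∈ M with P g = j, w g) (F : Finset ι) (A : Finset G)
    (hA : ∀ g ∈ S, P g ∈ F → g ∈ A) :
    #F * μ - ∑ g ∈ A, w g ≤ ∑ j ∈ F, ∑ g ∈ M \ S with P g = j, w g := by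
  have hsub : {g ∈ M | P g ∈ F} ⊆ {g ∈ M \ S | P g ∈ F} ∪ A := by
    intro g hg
    rw [mem_filter] at hg
    by_cases hgS : g ∈ S
    · exact mem_union_right _ (hA g hgS hg.2)
    · exact mem_union_left _ (mem_filter.2 ⟨mem_sdiff.2 ⟨hg.1, hgS⟩, hg.2⟩)
  have hsum : #F * μ ≤ ∑ g ∈ M with P g ∈ F, w g := by
    rw [← sum_fiberwise_eq_sum_filter]
    simpa using card_nsmul_le_sum F _ μ fun j _ => hP j
  rw [sum_fiberwise_eq_sum_filter]
  calc #F * μ - ∑ g ∈ A, w g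
      ≤ ∑ g ∈ {g ∈ M \ S | P g ∈ F} ∪ A, w g - ∑ g ∈ A, w g := by
        gcongr
        exact hsum.trans (sum_le_sum_of_subset_of_nonneg hsub fun g _ _ => hw g)
    _ ≤ ∑ g ∈ M \ S with P g ∈ F, w g := by
        have := sum_union_inter (s₁ := {g ∈ M \ S | P g ∈ F}) (s₂ := A) (f := w)
        linarith [sum_nonneg fun g (_ : g ∈ {g ∈ M \ S | P g ∈ F} ∩ A) => hw g]

theorem le_sum_sdiff_of_subset (hw : ∀ g, 0 ≤ w g)
    (hP : ∀ j, μ ≤ ∑ g ∈ M with P g = j, w g) {F T : Finset ι} (hFT : F ⊆ T) (A : Finset G)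
    (hA : ∀ g ∈ S, P g ∈ F → g ∈ A) (hμ : μ + ∑ g ∈ A, w g ≤ #F * μ) :
    μ ≤ ∑ j ∈ T, ∑ g ∈ M \ S with P g = j, w g := by
  have := card_mul_sub_le_sum_sdiff hw hP F A hA
  have := sum_le_sum_of_subset_of_nonneg (f := fun j => ∑ g ∈ M \ S with P g = j, w g) hFT
    fun j _ _ => sum_nonneg fun g _ => hw g
  linarith

theorem le_sum_insert_of_notMem_image (hw : ∀ g, 0 ≤ w g)
    (hP : ∀ j, μ ≤ ∑ g ∈ M with P g = j, w g) {k : ι} (hk : k ∉ S.image P) (t : Finset ι) :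
    μ ≤ ∑ j ∈ insert k t, ∑ g ∈ M \ S with P g = j, w g :=
  le_sum_sdiff_of_subset hw hP (singleton_subset_iff.2 (mem_insert_self k t)) ∅
    (fun g hg hgk => (hk (mem_image.2 ⟨g, hg, mem_singleton.1 hgk⟩)).elim) (by simp)

theorem canDissolve_of_card_image_le [Fintype ι] (hw : ∀ g, 0 ≤ w g)
    (hP : ∀ j, μ ≤ ∑ g ∈ M with P g = j, w g) {m : ℕ} (hm : #(S.image P) ≤ m)
    (hmι : m < Fintype.card ι) :
    CanDissolve (fun j => ∑ g ∈ M \ S with P g = j, w g) μ m := by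
  obtain ⟨R, hDR, hR⟩ := exists_superset_card_eq hm hmι.le
  obtain ⟨k₀, hk₀⟩ : (Rᶜ).Nonempty := by
    rw [← card_pos, card_compl]; omega
  refine ⟨R, fun _ => k₀, hR, fun _ _ => mem_compl.1 hk₀, fun k hk => ?_⟩
  exact le_sum_insert_of_notMem_image hw hP (fun h => hk (hDR h)) _

theorem canDissolve_of_card_image_eq_succ (hw : ∀ g, 0 ≤ w g)
    (hP : ∀ j, μ ≤ ∑ g ∈ M with P g = j, w g) {m : ℕ} (hm : #(S.image P) = m + 1)
    (hS : ∑ g ∈ S, w g ≤ m * μ) :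
    CanDissolve (fun j => ∑ g ∈ M \ S with P g = j, w g) μ m := by
  obtain ⟨k₀, hk₀⟩ : (S.image P).Nonempty := by
    rw [← card_pos]; omega
  refine ⟨(S.image P).erase k₀, fun _ => k₀, by rw [card_erase_of_mem hk₀, hm]; rfl,
    fun _ _ => notMem_erase _ _, fun k hk => ?_⟩
  by_cases hkk₀ : k = k₀
  · subst hkk₀
    rw [filter_true_of_mem fun _ _ => rfl, insert_erase hk₀]
    have := card_mul_sub_le_sum_sdiff hw hP (S.image P) S fun g hg _ => hg
    rw [hm, Nat.cast_succ] at this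
    linarith
  · exact le_sum_insert_of_notMem_image hw hP (fun h => hk (mem_erase.2 ⟨hkk₀, h⟩)) _

theorem canDissolve_of_nodup (hw : ∀ g, 0 ≤ w g) (hP : ∀ j, μ ≤ ∑ g ∈ M with P g = j, w g)
    {h₁ h₂ s₁ s₂ s₃ : G} (hnodup : [P h₁, P h₂, P s₁, P s₂, P s₃].Nodup)
    (hh : w h₁ + w h₂ + w s₁ ≤ 2 * μ) (hs : w s₂ + w s₃ ≤ μ) :
    CanDissolve (fun j => ∑ g ∈ M \ {h₁, h₂, s₁, s₂, s₃} with P g = j, w g) μ 3 := by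
  simp only [List.nodup_cons, List.mem_cons, List.not_mem_nil, not_or] at hnodup
  obtain ⟨⟨h12, h13, h14, h15, -⟩, ⟨h23, h24, h25, -⟩, ⟨h34, h35, -⟩, ⟨h45, -⟩, -⟩ := hnodup
  refine ⟨{P h₂, P s₁, P s₃}, fun j => if j = P s₃ then P s₂ else P h₁,
    card_eq_three.2 ⟨_, _, _, h23, h25, h35, rfl⟩, fun j hj => ?_, fun k hk => ?_⟩
  · grind
  by_cases hk₁ : k = P h₁
  · subst hk₁
    refine le_sum_sdiff_of_subset hw hP (F := {P h₁, P h₂, P s₁}) (by grind) {h₁, h₂, s₁}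
      (by grind) ?_
    rw [card_eq_three.2 ⟨_, _, _, h12, h13, h23, rfl⟩, sum_insert (by grind),
      sum_insert (by grind), sum_singleton]
    push_cast
    linarith
  by_cases hk₂ : k = P s₂
  · subst hk₂
    refine le_sum_sdiff_of_subset hw hP (F := {P s₂, P s₃}) (by grind) {s₂, s₃}
      (by grind) ?_
    rw [card_pair h45, sum_pair (by grind)]
    push_cast
    linarith
  exact le_sum_insert_of_notMem_image hw hP (by grind) _

end Bundles

theorem stmt15_general {G : Type*} [Fintype G] [DecidableEq G]
    (w : G → ℝ) (hw : ∀ g, 0 ≤ w g) (n : ℕ) (hn : 4 ≤ n)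
    (h₁ h₂ s₁ s₂ s₃ : G)
    (hh : ∀ g ∈ ({h₁, h₂} : Finset G),
      w g ≤ (4 / 5) * mms (fun S => ∑ a ∈ S, w a) n Finset.univ)
    (hs : ∀ g ∈ ({s₁, s₂, s₃} : Finset G),
      w g ≤ (2 / 5) * mms (fun S => ∑ a ∈ S, w a) n Finset.univ) :
    mms (fun S => ∑ a ∈ S, w a) n Finset.univ ≤
      mms (fun S => ∑ a ∈ S, w a) (n - 3)
        (Finset.univ \ {h₁, h₂, s₁, s₂, s₃}) := by
  set μ := mms (fun S => ∑ a ∈ S, w a) n univ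
  have : NeZero n := ⟨by omega⟩
  have hμ : 0 ≤ μ := le_mms_of_forall_le _ (Fintype.card_fin n) univ (fun _ => (0 : Fin n))
    fun _ => sum_nonneg fun g _ => hw g
  obtain ⟨P, hP⟩ := exists_forall_mms_le (fun S => ∑ a ∈ S, w a) (Nat.pos_of_neZero n) univ
  simp only [forall_mem_insert, mem_singleton, forall_eq] at hh hs
  obtain ⟨hh₁, hh₂⟩ := hh
  obtain ⟨hs₁, hs₂, hs₃⟩ := hs
  set S : Finset G := {h₁, h₂, s₁, s₂, s₃}
  refine le_mms_of_canDissolve (m := 3) w _ P (by omega) (by rw [Fintype.card_fin]; omega) ?_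
  have hD5 : #(S.image P) ≤ 5 := card_image_le.trans card_le_five
  obtain hD | hD | hD : #(S.image P) ≤ 3 ∨ #(S.image P) = 3 + 1 ∨ #(S.image P) = 5 := by omega
  · exact canDissolve_of_card_image_le hw hP hD (by rw [Fintype.card_fin]; omega)
  · have hwS : ∑ g ∈ S, w g ≤ w h₁ + w h₂ + w s₁ + w s₂ + w s₃ := by
      simpa [Fin.univ_succ, ← add_assoc, cons_eq_insert, map_eq_image, image_insert] using
        sum_image_le_of_nonneg (s := univ) (g := ![h₁, h₂, s₁, s₂, s₃]) (f := w) fun _ _ => hw _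
    exact canDissolve_of_card_image_eq_succ hw hP hD (by push_cast; linarith)
  · have hnodup : [P h₁, P h₂, P s₁, P s₂, P s₃].Nodup :=
      Multiset.coe_nodup.1 <| Multiset.toFinset_card_eq_card_iff_nodup.1 <| by
        simpa [S, image_insert] using hD
    exact canDissolve_of_nodup hw hP hnodup (by linarith) (by linarith)

/-- For an additive valuation (weights `w`), `n ≥ 4`, and five pairwise
distinct goods `h₁, h₂, s₁, s₂, s₃` with `w hⱼ ≤ (4/5)·μ^n(M)` and `w sⱼ ≤ (2/5)·μ^n(M)`,
removing them and three agents does not decrease the maximin share: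
`μ^{n−3}(M \ {h₁,h₂,s₁,s₂,s₃}) ≥ μ^n(M)`. -/
theorem stmt15 {G : Type*} [Fintype G] [DecidableEq G]
    (w : G → ℝ) (hw : ∀ g, 0 ≤ w g) (n : ℕ) (hn : 4 ≤ n)
    (h₁ h₂ s₁ s₂ s₃ : G)
    (hdist : ({h₁, h₂, s₁, s₂, s₃} : Finset G).card = 5)
    (hh : ∀ g ∈ ({h₁, h₂} : Finset G),
      w g ≤ (4 / 5) * mms (fun S => ∑ a ∈ S, w a) n Finset.univ)
    (hs : ∀ g ∈ ({s₁, s₂, s₃} : Finset G),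
      w g ≤ (2 / 5) * mms (fun S => ∑ a ∈ S, w a) n Finset.univ) :
    mms (fun S => ∑ a ∈ S, w a) n Finset.univ ≤
      mms (fun S => ∑ a ∈ S, w a) (n - 3)
        (Finset.univ \ {h₁, h₂, s₁, s₂, s₃}) :=
  stmt15_general w hw n hn h₁ h₂ s₁ s₂ s₃ hh hs
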